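/- arXiv:2101.03510 — 3 statements merged into one kernel-verified Lean document; each statement's English description precedes it below -/
import Mathlib

section
/- Let E be a real Banach space and r ≥ 2, and suppose there is a constant K > 0 such that (Σ_{k=1}^n ‖x_k*‖^r)^{1/r} ≤ K · w_1(x_1*,…,x_n*) for every finite sequence x_1*,…,x_n* in E* (this holds whenever E* has finite cotype r). Letate 1 ≤ q < p < ∞ satisfy 1/q − 1/p ≥ 1 − 1/r. Then H_{p,q}[E] = H_∞[E], and ‖f‖_∞ ≤ ‖f‖_{p,q} ≤ K‖f‖_∞ for every f ∈ H_∞[E]. -/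
open scoped ENNReal

/-- A function `f : E* → ℝ` is positively homogeneous. -/
def PosHomog {E : Type*} [NormedAddCommGroup E] [NormedSpace ℝ E]
    (f : (E →L[ℝ] ℝ) → ℝ) : Prop :=
  ∀ (c : ℝ), 0 ≤ c → ∀ φ : E →L[ℝ] ℝ, f (c • φ) = c * f φ

/-- The weak `q`-summing norm of a finite family in `E*`. -/
noncomputable def weakSumNorm {E : Type*} [NormedAddCommGroup E] [NormedSpace ℝ E]
    (q : ℝ) {n : ℕ} (xs : Fin n → (E →L[ℝ] ℝ)) : ℝ :=
  sSup ((fun x : E => (∑ k, |xs k x| ^ q) ^ (1 / q)) '' Metric.closedBall 0 1)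

/-- The `(p,q)`-summing norm of `f : E* → ℝ`, with values in `[0,∞]`. -/
noncomputable def pqNorm {E : Type*} [NormedAddCommGroup E] [NormedSpace ℝ E]
    (p q : ℝ) (f : (E →L[ℝ] ℝ) → ℝ) : ℝ≥0∞ :=
  ⨆ (n : ℕ) (xs : Fin n → (E →L[ℝ] ℝ)) (_ : weakSumNorm q xs ≤ 1),
    ENNReal.ofReal ((∑ k, |f (xs k)| ^ p) ^ (1 / p))

/-- The supremum norm `‖f‖_∞ = sup_{‖x*‖ ≤ 1} |f(x*)|`, with values in `[0,∞]`. -/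
noncomputable def supNormE {E : Type*} [NormedAddCommGroup E] [NormedSpace ℝ E]
    (f : (E →L[ℝ] ℝ) → ℝ) : ℝ≥0∞ :=
  ⨆ (φ : E →L[ℝ] ℝ) (_ : ‖φ‖ ≤ 1), ENNReal.ofReal |f φ|

/-! The lower bound tests `f` on a single functional. For the upper bound, homogeneity gives
`|f x*| ≤ ‖f‖_∞ ‖x*‖`, so it suffices to show `(Σ ‖x_k*‖^p)^{1/p} ≤ K` whenever
`w_q(x_1*, …, x_n*) ≤ 1`. Put `1/s = 1/r + 1/q - 1 ≥ 1/p`; then the `ℓ^p` norm is bounded by the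
`ℓ^s` norm, and `1/s = 1/r - 1/q'`. Choose weights `μ` with `‖μ‖_{q'} ≤ 1` for which Hölder's
inequality `‖(μ_k ‖x_k*‖)‖_r ≤ ‖μ‖_{q'} ‖(‖x_k*‖)‖_s` is an equality; the cotype hypothesis and
Hölder's inequality on the unit ball of `E` then give
`‖(‖x_k*‖)‖_s = ‖(‖μ_k x_k*‖)‖_r ≤ K w_1(μ_1 x_1*, …) ≤ K ‖μ‖_{q'} w_q(x_1*, …) ≤ K`. -/

lemma sum_rpow_le_rpow_sum {ι : Type*} (s : Finset ι) {f : ι → ℝ} (hf : ∀ i ∈ s, 0 ≤ f i)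
    {t : ℝ} (ht : 1 ≤ t) : ∑ i ∈ s, f i ^ t ≤ (∑ i ∈ s, f i) ^ t := by
  induction s using Finset.cons_induction with
  | empty => simp [Real.zero_rpow (by linarith : t ≠ 0)]
  | cons a s _ ih =>
    simp only [Finset.forall_mem_cons] at hf
    rw [Finset.sum_cons, Finset.sum_cons]
    exact (add_le_add_right (ih hf.2) _).trans
      (Real.add_rpow_le_rpow_add hf.1 (Finset.sum_nonneg hf.2) ht)

lemma Lp_le_Lq_of_le {ι : Type*} (s : Finset ι) {f : ι → ℝ} (hf : ∀ i ∈ s, 0 ≤ f i)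
    {p q : ℝ} (hq : 0 < q) (hqp : q ≤ p) :
    (∑ i ∈ s, f i ^ p) ^ (1 / p) ≤ (∑ i ∈ s, f i ^ q) ^ (1 / q) := by
  have hp : 0 < p := hq.trans_le hqp
  have hfq : ∀ i ∈ s, 0 ≤ f i ^ q := fun i hi => Real.rpow_nonneg (hf i hi) q
  have hpow : ∀ i ∈ s, f i ^ p = (f i ^ q) ^ (p / q) := fun i hi => by
    rw [← Real.rpow_mul (hf i hi), mul_div_cancel₀ p hq.ne']
  calc (∑ i ∈ s, f i ^ p) ^ (1 / p)
      ≤ ((∑ i ∈ s, f i ^ q) ^ (p / q)) ^ (1 / p) := by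
        rw [Finset.sum_congr rfl hpow]
        gcongr
        · exact Finset.sum_nonneg fun i hi => Real.rpow_nonneg (hfq i hi) _
        · exact sum_rpow_le_rpow_sum s hfq ((one_le_div hq).2 hqp)
    _ = (∑ i ∈ s, f i ^ q) ^ (1 / q) := by
        rw [← Real.rpow_mul (Finset.sum_nonneg hfq)]
        congr 1
        field_simp

/-- The equality case of Hölder's inequality `‖μ a‖_r ≤ ‖μ‖_t ‖a‖_s`, with `μ` a multiple of
`a ^ (s / t)`. -/
lemma exists_Lr_mul_eq_Ls_of_holderTriple {ι : Type*} [Fintype ι] (a : ι → ℝ)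
    (ha : ∀ i, 0 ≤ a i) {r s t : ℝ} (hts : t.HolderTriple s r) :
    ∃ μ : ι → ℝ, (∀ i, 0 ≤ μ i) ∧ ∑ i, μ i ^ t ≤ 1 ∧
      (∑ i, (μ i * a i) ^ r) ^ (1 / r) = (∑ i, a i ^ s) ^ (1 / s) := by
  obtain ⟨ht, hs, hr⟩ := hts.all_pos
  set S := ∑ i, a i ^ s
  have hS : 0 ≤ S := Finset.sum_nonneg fun i _ => Real.rpow_nonneg (ha i) s
  set T := S ^ (1 / t)
  have hT : 0 ≤ T := Real.rpow_nonneg hS _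
  have hexp : s / t + 1 = s / r := by
    have := hts.one_div_add_one_div
    field_simp at this ⊢
    linarith
  refine ⟨fun i => a i ^ (s / t) / T, fun i => div_nonneg (Real.rpow_nonneg (ha i) _) hT, ?_, ?_⟩
  · have hμt : ∀ i, (a i ^ (s / t) / T) ^ t = a i ^ s / S := fun i => by
      rw [Real.div_rpow (Real.rpow_nonneg (ha i) _) hT, ← Real.rpow_mul (ha i),
        div_mul_cancel₀ s ht.ne', ← Real.rpow_mul hS, one_div_mul_cancel ht.ne', Real.rpow_one]
    simp only [hμt, ← Finset.sum_div]
    exact div_self_le_one S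
  · have hμa : ∀ i, (a i ^ (s / t) / T * a i) ^ r = a i ^ s / T ^ r := fun i => by
      rw [div_mul_eq_mul_div, ← Real.rpow_add_one' (ha i) (by rw [hexp]; positivity), hexp,
        Real.div_rpow (Real.rpow_nonneg (ha i) _) hT, ← Real.rpow_mul (ha i),
        div_mul_cancel₀ s hr.ne']
    have h1s : 1 / r - 1 / t = 1 / s := by linarith [hts.one_div_add_one_div]
    simp only [hμa, ← Finset.sum_div]
    have hTr : (T ^ r) ^ (1 / r) = T := by rw [one_div, Real.rpow_rpow_inv hT hr.ne']
    rw [Real.div_rpow hS (Real.rpow_nonneg hT r), hTr,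
      ← Real.rpow_sub' hS (by rw [h1s]; positivity), h1s]

section WeakSumNorm

variable {E : Type*} [NormedAddCommGroup E] [NormedSpace ℝ E] {n : ℕ}

lemma weakSumNorm_nonneg (q : ℝ) (xs : Fin n → (E →L[ℝ] ℝ)) :
    0 ≤ weakSumNorm q xs :=
  Real.sSup_nonneg <| by
    rintro _ ⟨x, -, rfl⟩
    exact Real.rpow_nonneg (Finset.sum_nonneg fun k _ => Real.rpow_nonneg (abs_nonneg _) q) _

lemma le_weakSumNorm {q : ℝ} (hq : 0 ≤ q) (xs : Fin n → (E →L[ℝ] ℝ)) {x : E} (hx : ‖x‖ ≤ 1) :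
    (∑ k, |xs k x| ^ q) ^ (1 / q) ≤ weakSumNorm q xs := by
  refine le_csSup ⟨(∑ k, ‖xs k‖ ^ q) ^ (1 / q), ?_⟩ ⟨x, mem_closedBall_zero_iff.2 hx, rfl⟩
  rintro _ ⟨y, hy, rfl⟩
  have hy : ‖y‖ ≤ 1 := mem_closedBall_zero_iff.1 hy
  dsimp only
  gcongr with k
  calc |xs k y| = ‖xs k y‖ := (Real.norm_eq_abs _).symm
    _ ≤ ‖xs k‖ * ‖y‖ := (xs k).le_opNorm y
    _ ≤ ‖xs k‖ := mul_le_of_le_one_right (norm_nonneg _) hy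

lemma weakSumNorm_le {q C : ℝ} (hC : 0 ≤ C) {xs : Fin n → (E →L[ℝ] ℝ)}
    (h : ∀ x : E, ‖x‖ ≤ 1 → (∑ k, |xs k x| ^ q) ^ (1 / q) ≤ C) : weakSumNorm q xs ≤ C :=
  Real.sSup_le (by rintro _ ⟨x, hx, rfl⟩; exact h x (mem_closedBall_zero_iff.1 hx)) hC

lemma weakSumNorm_const_le_one {q : ℝ} (hq : 0 < q) {φ : E →L[ℝ] ℝ} (hφ : ‖φ‖ ≤ 1) :
    weakSumNorm q (fun _ : Fin 1 => φ) ≤ 1 :=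
  weakSumNorm_le zero_le_one fun x hx => by
    rw [Fin.sum_univ_one, one_div, Real.rpow_rpow_inv (abs_nonneg _) hq.ne', ← Real.norm_eq_abs]
    exact φ.le_of_opNorm_le_of_le hφ hx |>.trans_eq (one_mul 1)

lemma weakSumNorm_one_smul_le {q t : ℝ} (htq : t.HolderConjugate q) {μ : Fin n → ℝ}
    (hμ : ∀ k, 0 ≤ μ k) (xs : Fin n → (E →L[ℝ] ℝ)) :
    weakSumNorm 1 (fun k => μ k • xs k) ≤ (∑ k, μ k ^ t) ^ (1 / t) * weakSumNorm q xs := by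
  have hμt : 0 ≤ (∑ k, μ k ^ t) ^ (1 / t) :=
    Real.rpow_nonneg (Finset.sum_nonneg fun k _ => Real.rpow_nonneg (hμ k) t) _
  refine weakSumNorm_le (mul_nonneg hμt (weakSumNorm_nonneg q xs)) fun x hx => ?_
  simp only [Real.rpow_one, div_one, smul_apply, smul_eq_mul, abs_mul,
    abs_of_nonneg (hμ _)]
  calc ∑ k, μ k * |xs k x|
      ≤ (∑ k, μ k ^ t) ^ (1 / t) * (∑ k, |xs k x| ^ q) ^ (1 / q) :=
        Real.inner_le_Lp_mul_Lq_of_nonneg _ htq (fun k _ => hμ k) (fun k _ => abs_nonneg _)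
    _ ≤ (∑ k, μ k ^ t) ^ (1 / t) * weakSumNorm q xs :=
        mul_le_mul_of_nonneg_left (le_weakSumNorm htq.symm.nonneg xs hx) hμt

end WeakSumNorm

section Cotype

variable {E : Type*} [NormedAddCommGroup E] [NormedSpace ℝ E] {K r : ℝ}

lemma Ls_norm_le_mul_weakSumNorm (hK : 0 ≤ K)
    (hcotype : ∀ (n : ℕ) (xs : Fin n → (E →L[ℝ] ℝ)),
      (∑ k, ‖xs k‖ ^ r) ^ (1 / r) ≤ K * weakSumNorm 1 xs)
    {q s : ℝ} (hq : 1 ≤ q) (hs : 0 < s) (hqs : 1 / s = 1 / r + 1 / q - 1)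
    {n : ℕ} (xs : Fin n → (E →L[ℝ] ℝ)) :
    (∑ k, ‖xs k‖ ^ s) ^ (1 / s) ≤ K * weakSumNorm q xs := by
  rcases hq.eq_or_lt with rfl | hq
  · obtain rfl : s = r := by simpa using hqs
    exact hcotype n xs
  set t := q.conjExponent
  have htq : t.HolderConjugate q := (Real.HolderConjugate.conjExponent hq).symm
  have hts : t.HolderTriple s r := by
    refine ⟨?_, htq.pos, hs⟩
    have := htq.symm.one_sub_inv
    simp only [one_div] at hqs
    linarith
  obtain ⟨μ, hμ, hμt, hμa⟩ :=
    exists_Lr_mul_eq_Ls_of_holderTriple _ (fun k => norm_nonneg (xs k)) hts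
  have hμt' : (∑ k, μ k ^ t) ^ (1 / t) ≤ 1 :=
    Real.rpow_le_one (Finset.sum_nonneg fun k _ => Real.rpow_nonneg (hμ k) t) hμt htq.one_div_nonneg
  calc (∑ k, ‖xs k‖ ^ s) ^ (1 / s) = (∑ k, ‖μ k • xs k‖ ^ r) ^ (1 / r) := by
        simp only [norm_smul, Real.norm_eq_abs, abs_of_nonneg (hμ _), hμa]
    _ ≤ K * weakSumNorm 1 (fun k => μ k • xs k) := hcotype n _
    _ ≤ K * ((∑ k, μ k ^ t) ^ (1 / t) * weakSumNorm q xs) := by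
        gcongr
        exact weakSumNorm_one_smul_le htq hμ xs
    _ ≤ K * weakSumNorm q xs := by
        gcongr
        exact mul_le_of_le_one_left (weakSumNorm_nonneg q xs) hμt'

lemma Lp_norm_le_of_weakSumNorm_le_one (hK : 0 ≤ K)
    (hcotype : ∀ (n : ℕ) (xs : Fin n → (E →L[ℝ] ℝ)),
      (∑ k, ‖xs k‖ ^ r) ^ (1 / r) ≤ K * weakSumNorm 1 xs)
    {p q : ℝ} (hq : 1 ≤ q) (hp : 0 < p) (hdefect : 1 - 1 / r ≤ 1 / q - 1 / p)
    {n : ℕ} {xs : Fin n → (E →L[ℝ] ℝ)} (hxs : weakSumNorm q xs ≤ 1) :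
    (∑ k, ‖xs k‖ ^ p) ^ (1 / p) ≤ K := by
  set s := 1 / (1 / r + 1 / q - 1)
  have hs_inv : 1 / s = 1 / r + 1 / q - 1 := one_div_one_div _
  have hps : 1 / p ≤ 1 / s := by rw [hs_inv]; linarith
  have hs : 0 < s := one_div_pos.1 ((one_div_pos.2 hp).trans_le hps)
  calc (∑ k, ‖xs k‖ ^ p) ^ (1 / p)
      ≤ (∑ k, ‖xs k‖ ^ s) ^ (1 / s) :=
        Lp_le_Lq_of_le _ (fun k _ => norm_nonneg _) hs (le_of_one_div_le_one_div hp hps)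
    _ ≤ K * weakSumNorm q xs := Ls_norm_le_mul_weakSumNorm hK hcotype hq hs hs_inv xs
    _ ≤ K := mul_le_of_le_one_right hK hxs

end Cotype

section HomogeneousFunctions

variable {E : Type*} [NormedAddCommGroup E] [NormedSpace ℝ E] {f : (E →L[ℝ] ℝ) → ℝ}

lemma supNormE_le_pqNorm {p q : ℝ} (hp : 0 < p) (hq : 0 < q) : supNormE f ≤ pqNorm p q f := by
  refine iSup₂_le fun φ hφ => ?_
  have hsingle : |f φ| = (∑ k, |f ((fun _ : Fin 1 => φ) k)| ^ p) ^ (1 / p) := by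
    rw [Fin.sum_univ_one, one_div, Real.rpow_rpow_inv (abs_nonneg _) hp.ne']
  rw [hsingle]
  exact le_iSup_of_le 1 <| le_iSup_of_le _ <| le_iSup_of_le (weakSumNorm_const_le_one hq hφ) le_rfl

lemma PosHomog.abs_le_mul_norm (hf : PosHomog f) {M : ℝ} (hM : ∀ φ, ‖φ‖ ≤ 1 → |f φ| ≤ M)
    (φ : E →L[ℝ] ℝ) : |f φ| ≤ M * ‖φ‖ := by
  rcases eq_or_ne φ 0 with rfl | hφ
  · have hf0 : f 0 = 0 := by simpa using hf 0 le_rfl 0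
    simp [hf0]
  calc |f φ| = |f (‖φ‖ • ‖φ‖⁻¹ • φ)| := by rw [smul_inv_smul₀ (norm_ne_zero_iff.2 hφ)]
    _ = |f (‖φ‖⁻¹ • φ)| * ‖φ‖ := by rw [hf _ (norm_nonneg _), abs_mul, abs_norm, mul_comm]
    _ ≤ M * ‖φ‖ := by gcongr; exact hM _ (norm_smul_inv_norm hφ).le

lemma pqNorm_le_ofReal_mul {p q K M : ℝ} (hp : 0 < p) (hM : 0 ≤ M)
    (hfM : ∀ φ, |f φ| ≤ M * ‖φ‖)
    (hK : ∀ (n : ℕ) (xs : Fin n → (E →L[ℝ] ℝ)), weakSumNorm q xs ≤ 1 →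
      (∑ k, ‖xs k‖ ^ p) ^ (1 / p) ≤ K) :
    pqNorm p q f ≤ ENNReal.ofReal (M * K) := by
  refine iSup_le fun n => iSup₂_le fun xs hxs => ENNReal.ofReal_le_ofReal ?_
  calc (∑ k, |f (xs k)| ^ p) ^ (1 / p)
      ≤ (∑ k, (M * ‖xs k‖) ^ p) ^ (1 / p) := by
        gcongr with k
        exact hfM (xs k)
    _ = M * (∑ k, ‖xs k‖ ^ p) ^ (1 / p) := by
        simp only [Real.mul_rpow hM (norm_nonneg _), ← Finset.mul_sum]
        rw [Real.mul_rpow (by positivity) (by positivity), one_div, Real.rpow_rpow_inv hM hp.ne']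
    _ ≤ M * K := by gcongr; exact hK n xs hxs

lemma PosHomog.pqNorm_le_ofReal_mul_supNormE (hf : PosHomog f) {p q K : ℝ} (hp : 0 < p)
    (hK₀ : 0 < K)
    (hK : ∀ (n : ℕ) (xs : Fin n → (E →L[ℝ] ℝ)), weakSumNorm q xs ≤ 1 →
      (∑ k, ‖xs k‖ ^ p) ^ (1 / p) ≤ K) :
    pqNorm p q f ≤ ENNReal.ofReal K * supNormE f := by
  by_cases htop : supNormE f = ⊤
  · rw [htop, ENNReal.mul_top (ENNReal.ofReal_pos.2 hK₀).ne']
    exact le_top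
  have hM : ∀ φ : E →L[ℝ] ℝ, ‖φ‖ ≤ 1 → |f φ| ≤ (supNormE f).toReal := fun φ hφ =>
    (ENNReal.ofReal_le_iff_le_toReal htop).1 (le_iSup₂_of_le φ hφ le_rfl)
  calc pqNorm p q f ≤ ENNReal.ofReal ((supNormE f).toReal * K) :=
        pqNorm_le_ofReal_mul hp ENNReal.toReal_nonneg (hf.abs_le_mul_norm hM) hK
    _ = ENNReal.ofReal K * supNormE f := by
        rw [mul_comm, ENNReal.ofReal_mul hK₀.le, ENNReal.ofReal_toReal htop]

end HomogeneousFunctions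

theorem Hpq_eq_Hinfty_of_cotype_general
    (E : Type*) [NormedAddCommGroup E] [NormedSpace ℝ E]
    (r : ℝ) (K : ℝ) (hK : 0 < K)
    (hcotype : ∀ (n : ℕ) (xs : Fin n → (E →L[ℝ] ℝ)),
      (∑ k, ‖xs k‖ ^ r) ^ (1 / r) ≤ K * weakSumNorm 1 xs)
    (p q : ℝ) (hq : 1 ≤ q) (hqp : q < p)
    (hdefect : 1 - 1 / r ≤ 1 / q - 1 / p) :
    ∀ f : (E →L[ℝ] ℝ) → ℝ, PosHomog f →
      supNormE f ≤ pqNorm p q f ∧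
      pqNorm p q f ≤ ENNReal.ofReal K * supNormE f ∧
      (pqNorm p q f < ⊤ ↔ supNormE f < ⊤) := by
  intro f hf
  have hp : 0 < p := by linarith
  have hlower : supNormE f ≤ pqNorm p q f := supNormE_le_pqNorm hp (by linarith)
  have hupper := hf.pqNorm_le_ofReal_mul_supNormE hp hK fun _ _ hxs =>
    Lp_norm_le_of_weakSumNorm_le_one hK.le hcotype hq hp hdefect hxs
  exact ⟨hlower, hupper, hlower.trans_lt,
    fun h => hupper.trans_lt (ENNReal.mul_lt_top ENNReal.ofReal_lt_top h)⟩

/-- Suppose `E*` has finite cotype `r ≥ 2`, witnessed by a constant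
`K > 0` with `(Σ‖x_k*‖^r)^{1/r} ≤ K·w₁(x₁*,…,x_n*)` for all finite families in `E*`.
If `1 ≤ q < p < ∞` satisfy `1/q − 1/p ≥ 1 − 1/r`, then `H_{p,q}[E] = H_∞[E]` with
`‖f‖_∞ ≤ ‖f‖_{p,q} ≤ K·‖f‖_∞` for every `f ∈ H_∞[E]`. -/
theorem Hpq_eq_Hinfty_of_cotype
    (E : Type*) [NormedAddCommGroup E] [NormedSpace ℝ E] [CompleteSpace E]
    (r : ℝ) (hr : 2 ≤ r) (K : ℝ) (hK : 0 < K)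
    (hcotype : ∀ (n : ℕ) (xs : Fin n → (E →L[ℝ] ℝ)),
      (∑ k, ‖xs k‖ ^ r) ^ (1 / r) ≤ K * weakSumNorm 1 xs)
    (p q : ℝ) (hq : 1 ≤ q) (hqp : q < p)
    (hdefect : 1 - 1 / r ≤ 1 / q - 1 / p) :
    ∀ f : (E →L[ℝ] ℝ) → ℝ, PosHomog f →
      supNormE f ≤ pqNorm p q f ∧
      pqNorm p q f ≤ ENNReal.ofReal K * supNormE f ∧
      (pqNorm p q f < ⊤ ↔ supNormE f < ⊤) :=
  Hpq_eq_Hinfty_of_cotype_general E r K hK hcotype p q hq hqp hdefect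
end

section
/- Let E be a real Banach space, 1 ≤ p < ∞, and let μ be a regular Borel probability measure on B_{E**} (with the weak* topology). Then the function f_μ^p : E* → ℝ, f_μ^p(x*) = (∫_{B_{E**}} |⟨x**, x*⟩|^p dμ(x**))^{1/p}, is well defined, nonnegative, and positively homogeneous, and it belongs to H_p[E] with ‖f_μ^p‖_p ≤ 1. -/
open scoped ENNReal

open MeasureTheory

/-- The closed unit ball of the bidual `E**`, equipped with the relative weak* topology. -/
def bidualBall (E : Type*) [NormedAddCommGroup E] [NormedSpace ℝ E] :
    Set (WeakDual ℝ (E →L[ℝ] ℝ)) :=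
  { ψ : WeakDual ℝ (E →L[ℝ] ℝ) | ‖WeakDual.toStrongDual ψ‖ ≤ 1 }

/-- We equip the bidual ball with its Borel σ-algebra. -/
noncomputable instance bidualBall.instMeasurableSpace (E : Type*) [NormedAddCommGroup E]
    [NormedSpace ℝ E] : MeasurableSpace (bidualBall E) := borel _

instance bidualBall.instBorelSpace (E : Type*) [NormedAddCommGroup E]
    [NormedSpace ℝ E] : BorelSpace (bidualBall E) := ⟨rfl⟩

/-- The function `f_μ^p(x*) = (∫_{B_{E**}} |⟨x**, x*⟩|^p dμ(x**))^{1/p}` associated with a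
measure `μ` on the bidual ball. -/
noncomputable def muFun {E : Type*} [NormedAddCommGroup E] [NormedSpace ℝ E]
    (p : ℝ) (μ : Measure (bidualBall E)) (φ : E →L[ℝ] ℝ) : ℝ :=
  (∫ ψ : bidualBall E, |(ψ : WeakDual ℝ (E →L[ℝ] ℝ)) φ| ^ p ∂μ) ^ (1 / p)

/-! For `x** ∈ B_{E**}` and `w_p(x_1*,…,x_n*) ≤ 1` one has `∑ |x**(x_k*)|^p ≤ 1`: the map
`x** ↦ (x**(x_k*))_k` is the bitranspose of `T : E → ℓ_p^n, x ↦ (x_k*(x))_k`, so by Hahn–Banach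
duality in `ℓ_p^n` its norm is at most `‖T‖ = w_p(x_1*,…,x_n*)`. Integrating this pointwise bound
against the probability measure `μ` gives `∑ f_μ^p(x_k*)^p ≤ 1`. -/

namespace ContinuousLinearMap

variable {E : Type*} [NormedAddCommGroup E] [NormedSpace ℝ E] {ι : Type*} (p : ℝ≥0∞)

def piLp (xs : ι → (E →L[ℝ] ℝ)) : E →L[ℝ] PiLp p (fun _ : ι => ℝ) :=
  (PiLp.continuousLinearEquiv p ℝ _).symm.toContinuousLinearMap.comp (ContinuousLinearMap.pi xs)

@[simp]
lemma piLp_apply (xs : ι → (E →L[ℝ] ℝ)) (x : E) :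
    piLp p xs x = WithLp.toLp p (fun k => xs k x) := rfl

variable [Fintype ι]

lemma _root_.PiLp.dual_apply_eq_sum (f : StrongDual ℝ (PiLp p fun _ : ι => ℝ))
    (v : PiLp p fun _ : ι => ℝ) : f v = ∑ i, v i * f (PiLp.basisFun p ℝ ι i) := by
  conv_lhs => rw [← (PiLp.basisFun p ℝ ι).sum_repr v]
  simp [map_sum, PiLp.basisFun_repr]

lemma dual_comp_piLp (f : StrongDual ℝ (PiLp p fun _ : ι => ℝ)) (xs : ι → (E →L[ℝ] ℝ)) :
    f.comp (piLp p xs) = ∑ i, f (PiLp.basisFun p ℝ ι i) • xs i := by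
  ext x
  rw [comp_apply, PiLp.dual_apply_eq_sum p f]
  simp [mul_comm]

variable [Fact (1 ≤ p)]

lemma norm_toLp_bidual_apply_le (xs : ι → (E →L[ℝ] ℝ)) (ψ : StrongDual ℝ (E →L[ℝ] ℝ)) :
    ‖WithLp.toLp p (fun k => ψ (xs k))‖ ≤ ‖ψ‖ * ‖piLp p xs‖ := by
  refine NormedSpace.norm_le_dual_bound ℝ _ (by positivity) fun f => ?_
  have hf : f (WithLp.toLp p (fun k => ψ (xs k))) = ψ (f.comp (piLp p xs)) := by
    rw [dual_comp_piLp, PiLp.dual_apply_eq_sum p f]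
    simp [map_sum, mul_comm]
  calc ‖f (WithLp.toLp p (fun k => ψ (xs k)))‖ = ‖ψ (f.comp (piLp p xs))‖ := by rw [hf]
    _ ≤ ‖ψ‖ * (‖f‖ * ‖piLp p xs‖) := (ψ.le_opNorm _).trans (by gcongr; exact f.opNorm_comp_le _)
    _ = ‖ψ‖ * ‖piLp p xs‖ * ‖f‖ := by ring

variable {p}

lemma norm_piLp_apply (hp : p ≠ ∞) (xs : ι → (E →L[ℝ] ℝ)) (x : E) :
    ‖piLp p xs x‖ = (∑ k, |xs k x| ^ p.toReal) ^ (1 / p.toReal) := by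
  have hp0 : 0 < p.toReal := ENNReal.toReal_pos (zero_lt_one.trans_le Fact.out).ne' hp
  simp [PiLp.norm_eq_sum hp0, Real.norm_eq_abs]

lemma norm_piLp_le_one_of_weakSumNorm_le_one (hp : p ≠ ∞) {n : ℕ} {xs : Fin n → (E →L[ℝ] ℝ)}
    (h : weakSumNorm p.toReal xs ≤ 1) : ‖piLp p xs‖ ≤ 1 := by
  have hbdd : BddAbove ((fun x => ‖piLp p xs x‖) '' Metric.closedBall 0 1) := by
    refine ⟨‖piLp p xs‖, ?_⟩
    rintro _ ⟨x, hx, rfl⟩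
    simpa using (piLp p xs).le_opNorm_of_le (mem_closedBall_zero_iff.mp hx)
  refine opNorm_le_of_unit_norm zero_le_one fun x hx => ?_
  refine (le_csSup hbdd ⟨x, by simp [hx], rfl⟩).trans ?_
  simpa only [weakSumNorm, norm_piLp_apply hp] using h

end ContinuousLinearMap

open ContinuousLinearMap

lemma sum_abs_apply_rpow_le_one_of_mem_bidualBall {E : Type*} [NormedAddCommGroup E]
    [NormedSpace ℝ E] {p : ℝ} (hp : 1 ≤ p) {n : ℕ} {xs : Fin n → (E →L[ℝ] ℝ)}
    (h : weakSumNorm p xs ≤ 1) {ψ : WeakDual ℝ (E →L[ℝ] ℝ)} (hψ : ψ ∈ bidualBall E) :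
    ∑ k, |ψ (xs k)| ^ p ≤ 1 := by
  have hp0 : 0 < p := zero_lt_one.trans_le hp
  have : Fact (1 ≤ ENNReal.ofReal p) := ⟨by simpa using hp⟩
  have hP : (ENNReal.ofReal p).toReal = p := ENNReal.toReal_ofReal hp0.le
  have hT := norm_piLp_le_one_of_weakSumNorm_le_one ENNReal.ofReal_ne_top (by rwa [hP])
  have hψT := (norm_toLp_bidual_apply_le _ xs (WeakDual.toStrongDual ψ)).trans
    (mul_le_one₀ hψ (norm_nonneg _) hT)
  rw [PiLp.norm_eq_sum (by rwa [hP]), hP, one_div, Real.rpow_inv_le_iff_of_pos (by positivity)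
    zero_le_one hp0, Real.one_rpow] at hψT
  simpa [Real.norm_eq_abs] using hψT

section MuFun

variable {E : Type*} [NormedAddCommGroup E] [NormedSpace ℝ E] {p : ℝ}
  (μ : Measure (bidualBall E))

lemma muFun_nonneg (φ : E →L[ℝ] ℝ) : 0 ≤ muFun p μ φ :=
  Real.rpow_nonneg (integral_nonneg fun _ => Real.rpow_nonneg (abs_nonneg _) _) _

lemma muFun_rpow (hp : p ≠ 0) (φ : E →L[ℝ] ℝ) :
    muFun p μ φ ^ p = ∫ ψ : bidualBall E, |(ψ : WeakDual ℝ (E →L[ℝ] ℝ)) φ| ^ p ∂μ := by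
  rw [muFun, one_div, Real.rpow_inv_rpow
    (integral_nonneg fun _ => Real.rpow_nonneg (abs_nonneg _) _) hp]

lemma posHomog_muFun (hp : p ≠ 0) : PosHomog (muFun p μ) := by
  intro c hc φ
  have hpow : ∀ ψ : bidualBall E, |(ψ : WeakDual ℝ (E →L[ℝ] ℝ)) (c • φ)| ^ p
      = c ^ p * |(ψ : WeakDual ℝ (E →L[ℝ] ℝ)) φ| ^ p := fun ψ => by
    rw [map_smul, smul_eq_mul, abs_mul, abs_of_nonneg hc, Real.mul_rpow hc (abs_nonneg _)]
  simp_rw [muFun, hpow]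
  rw [integral_const_mul, Real.mul_rpow (by positivity)
    (integral_nonneg fun _ => Real.rpow_nonneg (abs_nonneg _) _),
    ← Real.rpow_mul hc, mul_one_div_cancel hp, Real.rpow_one]

lemma integrable_abs_apply_rpow [IsFiniteMeasure μ] (hp : 0 ≤ p) (φ : E →L[ℝ] ℝ) :
    Integrable (fun ψ : bidualBall E => |(ψ : WeakDual ℝ (E →L[ℝ] ℝ)) φ| ^ p) μ := by
  have hcont : Continuous fun ψ : bidualBall E => |(ψ : WeakDual ℝ (E →L[ℝ] ℝ)) φ| ^ p :=
    ((WeakDual.eval_continuous φ).comp continuous_subtype_val).abs.rpow_const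
      fun _ => Or.inr hp
  refine Integrable.mono' (integrable_const (‖φ‖ ^ p)) hcont.aestronglyMeasurable
    (ae_of_all _ fun ψ => ?_)
  rw [Real.norm_eq_abs, abs_of_nonneg (Real.rpow_nonneg (abs_nonneg _) _)]
  refine Real.rpow_le_rpow (abs_nonneg _) ?_ hp
  simpa [mul_comm] using (WeakDual.toStrongDual (ψ : WeakDual ℝ (E →L[ℝ] ℝ))).le_of_opNorm_le
    ψ.2 φ

lemma pqNorm_muFun_le_one [IsProbabilityMeasure μ] (hp : 1 ≤ p) : pqNorm p p (muFun p μ) ≤ 1 := by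
  have hp0 : 0 < p := zero_lt_one.trans_le hp
  refine iSup_le fun n => iSup_le fun xs => iSup_le fun hxs => ?_
  have hint := fun k => integrable_abs_apply_rpow μ hp0.le (xs k)
  have hsum : ∑ k, |muFun p μ (xs k)| ^ p ≤ 1 := calc
    ∑ k, |muFun p μ (xs k)| ^ p
        = ∫ ψ : bidualBall E, ∑ k, |(ψ : WeakDual ℝ (E →L[ℝ] ℝ)) (xs k)| ^ p ∂μ := by
      simp_rw [abs_of_nonneg (muFun_nonneg μ _), muFun_rpow μ hp0.ne']
      exact (integral_finsetSum _ fun k _ => hint k).symm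
    _ ≤ ∫ _ : bidualBall E, (1 : ℝ) ∂μ :=
      integral_mono (integrable_finsetSum _ fun k _ => hint k) (integrable_const 1)
        fun ψ => sum_abs_apply_rpow_le_one_of_mem_bidualBall hp hxs ψ.2
    _ = 1 := by simp
  exact ENNReal.ofReal_le_one.2 (Real.rpow_le_one (by positivity) hsum (by positivity))

end MuFun

theorem muFun_mem_Hp_general
    (E : Type*) [NormedAddCommGroup E] [NormedSpace ℝ E]
    (p : ℝ) (hp : 1 ≤ p)
    (μ : Measure (bidualBall E)) [IsProbabilityMeasure μ] :
    (∀ φ : E →L[ℝ] ℝ, 0 ≤ muFun p μ φ) ∧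
    PosHomog (muFun p μ) ∧
    pqNorm p p (muFun p μ) ≤ 1 :=
  ⟨muFun_nonneg μ, posHomog_muFun μ (by positivity), pqNorm_muFun_le_one μ hp⟩

/-- For a regular Borel probability measure `μ` on `B_{E**}` (weak*
topology), the function `f_μ^p` is nonnegative, positively homogeneous, and belongs to
`H_p[E]` with `‖f_μ^p‖_p ≤ 1`. -/
theorem muFun_mem_Hp
    (E : Type*) [NormedAddCommGroup E] [NormedSpace ℝ E] [CompleteSpace E]
    (p : ℝ) (hp : 1 ≤ p)
    (μ : Measure (bidualBall E)) [IsProbabilityMeasure μ] [μ.Regular] :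
    (∀ φ : E →L[ℝ] ℝ, 0 ≤ muFun p μ φ) ∧
    PosHomog (muFun p μ) ∧
    pqNorm p p (muFun p μ) ≤ 1 :=
  muFun_mem_Hp_general E p hp μ
end

section
/- Let E be a real Banach space, 1 ≤ p < ∞, and let f ∈ H_p[E] with f(x*) ≥ 0 for all x* ∈ E*. Then there exists a regular Borel probability measure μ on B_{E**} (with the weak* topology) such that f(x*) ≤ ‖f‖_p · f_μ^p(x*) for every x* ∈ E*, where f_μ^p(x*) = (∫_{B_{E**}} |⟨x**, x*⟩|^p dμ(x**))^{1/p}. -/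
open scoped ENNReal

open MeasureTheory

/-! Ky Fan–Pietsch argument. For a finite family `x₁*, …, xₙ*` consider the continuous function
`ψ ↦ ∑ₖ (f(xₖ*)^p - ‖f‖ₚ^p |ψ(xₖ*)|^p)` on the weak*-compact ball `B_{E**}`. By positive
homogeneity of `f` these functions form a convex cone, and each one is `≤ 0` at a maximizer of
`ψ ↦ ∑ₖ |ψ(xₖ*)|^p`, because that maximum bounds the weak `p`-summing norm of the family from above.
Separating the cone from the open cone of strictly positive functions in `C(B_{E**}, ℝ)` gives a
normalized positive functional that is `≤ 0` on the cone; the Riesz–Markov–Kakutani theorem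
represents it by a regular Borel probability measure `μ`, and testing on a single `x*` yields
`f(x*)^p ≤ ‖f‖ₚ^p ∫ |⟨x**, x*⟩|^p dμ`. -/

open Set
open scoped CompactlySupported

lemma nonpos_and_nonneg_of_forall_pos_mul_lt {c u : ℝ} (h : ∀ t : ℝ, 0 < t → t * c < u) :
    c ≤ 0 ∧ 0 ≤ u := by
  have hu1 := h 1 one_pos
  constructor
  · by_contra! hc
    have := h ((|u| + 1) / c) (by positivity)
    rw [div_mul_cancel₀ _ hc.ne'] at this
    linarith [le_abs_self u]
  · by_contra! hu
    have hc : c < 0 := by linarith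
    have := h (u / (2 * c)) (div_pos_of_neg_of_neg hu (by linarith))
    rw [div_mul_eq_mul_div, mul_div_mul_right _ _ hc.ne] at this
    linarith

theorem le_mul_rpow_inv_of_rpow_le_mul {a b C p : ℝ} (hp : 0 < p) (ha : 0 ≤ a) (hb : 0 ≤ b)
    (hC : 0 ≤ C) (h : a ^ p ≤ C ^ p * b) : a ≤ C * b ^ p⁻¹ := by
  rwa [← Real.rpow_rpow_inv hC hp.ne', ← Real.mul_rpow (by positivity) hb,
    Real.le_rpow_inv_iff_of_pos ha (by positivity) hp]

namespace ContinuousMap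

variable {X : Type*} [TopologicalSpace X]

theorem convex_setOf_forall_pos : Convex ℝ {g : C(X, ℝ) | ∀ x, 0 < g x} :=
  fun _ hg _ hh _ _ ha hb hab x => convex_Ioi (0 : ℝ) (hg x) (hh x) ha hb hab

variable [CompactSpace X]

theorem isOpen_setOf_forall_pos : IsOpen {g : C(X, ℝ) | ∀ x, 0 < g x} := by
  simpa only [range_subset_iff, mem_Ioi] using isOpen_setOfPred_range_subset (X := X) isOpen_Ioi

theorem exists_positiveLinearMap_map_one_forall_nonpos {A : Set C(X, ℝ)} (hA : Convex ℝ A)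
    (h0 : 0 ∈ A) (hA' : ∀ g ∈ A, ∃ x, g x ≤ 0) :
    ∃ Λ : C(X, ℝ) →ₚ[ℝ] ℝ, Λ 1 = 1 ∧ ∀ g ∈ A, Λ g ≤ 0 := by
  have hdisj : Disjoint {g : C(X, ℝ) | ∀ x, 0 < g x} A := by
    refine disjoint_left.2 fun g hg hgA => ?_
    obtain ⟨x, hx⟩ := hA' g hgA
    exact (hg x).not_ge hx
  obtain ⟨L, u, hLB, hLA⟩ :=
    geometric_hahn_banach_open convex_setOf_forall_pos isOpen_setOf_forall_pos hA hdisj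
  have hL1 : L 1 < 0 := (hLB 1 fun _ => one_pos).trans_le (by simpa using hLA 0 h0)
  have hu : 0 ≤ u := (nonpos_and_nonneg_of_forall_pos_mul_lt fun t ht => by
    simpa using hLB (t • 1) fun _ => by simpa using ht).2
  have hLpos : ∀ g : C(X, ℝ), 0 ≤ g → L g ≤ 0 := fun g hg =>
    (nonpos_and_nonneg_of_forall_pos_mul_lt (u := u - L 1) fun t ht => by
      have := hLB (t • g + 1) fun x => by
        simpa using add_pos_of_nonneg_of_pos (mul_nonneg ht.le (hg x)) one_pos
      simp only [map_add, map_smul, smul_eq_mul] at this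
      linarith).1
  have hc : 0 ≤ (-L 1)⁻¹ := inv_nonneg.2 (neg_nonneg.2 hL1.le)
  refine ⟨PositiveLinearMap.mk₀ ((-L 1)⁻¹ • -L : C(X, ℝ) →L[ℝ] ℝ) fun g hg => ?_, ?_,
    fun g hg => ?_⟩
  · exact mul_nonneg hc (neg_nonneg.2 (hLpos g hg))
  · exact inv_mul_cancel₀ (neg_ne_zero.2 hL1.ne)
  · exact mul_nonpos_of_nonneg_of_nonpos hc
      (neg_nonpos.2 (hu.trans (hLA g hg)))

theorem exists_isProbabilityMeasure_integral_eq [T2Space X] [MeasurableSpace X] [BorelSpace X]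
    (Λ : C(X, ℝ) →ₚ[ℝ] ℝ) (hΛ : Λ 1 = 1) :
    ∃ μ : Measure X, IsProbabilityMeasure μ ∧ μ.Regular ∧ ∀ g : C(X, ℝ), ∫ x, g x ∂μ = Λ g := by
  let Λc : C_c(X, ℝ) →ₚ[ℝ] ℝ :=
    { toFun g := Λ g.toContinuousMap
      map_add' _ _ := map_add Λ _ _
      map_smul' _ _ := map_smul Λ _ _
      monotone' _ _ h := Λ.monotone' h }
  have hint (g : C(X, ℝ)) : ∫ x, g x ∂(RealRMK.rieszMeasure Λc) = Λ g :=
    RealRMK.integral_rieszMeasure Λc (CompactlySupportedContinuousMap.continuousMapEquiv g)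
  refine ⟨RealRMK.rieszMeasure Λc, ⟨?_⟩, inferInstance, hint⟩
  have := hint 1
  rw [hΛ] at this
  simp only [ContinuousMap.one_apply, integral_const, smul_eq_mul, mul_one, measureReal_def] at this
  exact (ENNReal.toReal_eq_one_iff _).1 this

end ContinuousMap

section Bidual

variable {E : Type*} [NormedAddCommGroup E] [NormedSpace ℝ E]

namespace bidualBall

instance instCompactSpace : CompactSpace (bidualBall E) := by
  refine isCompact_iff_compactSpace.1 ?_
  convert WeakDual.isCompact_closedBall (𝕜 := ℝ) (E := E →L[ℝ] ℝ) 0 1 using 1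
  ext ψ
  simp [bidualBall]

theorem zero_mem : (0 : WeakDual ℝ (E →L[ℝ] ℝ)) ∈ bidualBall E := by
  show ‖WeakDual.toStrongDual (0 : WeakDual ℝ (E →L[ℝ] ℝ))‖ ≤ 1
  rw [map_zero]
  exact (norm_zero (E := StrongDual ℝ (E →L[ℝ] ℝ))).trans_le zero_le_one

theorem inclusionInDoubleDual_mem {x : E} (hx : ‖x‖ ≤ 1) :
    (NormedSpace.inclusionInDoubleDual ℝ E x : WeakDual ℝ (E →L[ℝ] ℝ)) ∈ bidualBall E :=
  (NormedSpace.double_dual_bound ℝ E x).trans hx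

noncomputable def evalAbsRpow {p : ℝ} (hp : 0 ≤ p) (φ : E →L[ℝ] ℝ) : C(bidualBall E, ℝ) :=
  ⟨fun ψ => |(ψ : WeakDual ℝ (E →L[ℝ] ℝ)) φ| ^ p,
    ((WeakDual.eval_continuous φ).comp continuous_subtype_val).abs.rpow_const
      fun _ => Or.inr hp⟩

theorem evalAbsRpow_apply {p : ℝ} (hp : 0 ≤ p) (φ : E →L[ℝ] ℝ) (ψ : bidualBall E) :
    evalAbsRpow hp φ ψ = |(ψ : WeakDual ℝ (E →L[ℝ] ℝ)) φ| ^ p :=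
  rfl

theorem evalAbsRpow_nonneg {p : ℝ} (hp : 0 ≤ p) (φ : E →L[ℝ] ℝ) (ψ : bidualBall E) :
    0 ≤ evalAbsRpow hp φ ψ := by
  rw [evalAbsRpow_apply]
  positivity

theorem evalAbsRpow_smul {p : ℝ} (hp : 0 ≤ p) {c : ℝ} (hc : 0 ≤ c) (φ : E →L[ℝ] ℝ) :
    evalAbsRpow hp (c • φ) = c ^ p • evalAbsRpow hp φ := by
  ext ψ
  simp [evalAbsRpow_apply, abs_mul, abs_of_nonneg hc, Real.mul_rpow hc (abs_nonneg _)]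

end bidualBall

open bidualBall

theorem PosHomog.rpow_map_smul {f : (E →L[ℝ] ℝ) → ℝ} (hf : PosHomog f) {p c : ℝ} (hc : 0 ≤ c)
    {φ : E →L[ℝ] ℝ} (hφ : 0 ≤ f φ) : f (c • φ) ^ p = c ^ p * f φ ^ p := by
  rw [hf c hc, Real.mul_rpow hc hφ]

/-- Pietsch domination with constant `C` says that some probability measure gives all these
functions nonpositive integral. -/
noncomputable def pietschTerm {p : ℝ} (hp : 0 ≤ p) (f : (E →L[ℝ] ℝ) → ℝ) (C : ℝ)
    (φ : E →L[ℝ] ℝ) : C(bidualBall E, ℝ) :=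
  f φ ^ p • 1 - C ^ p • evalAbsRpow hp φ

theorem pietschTerm_smul {p : ℝ} (hp : 0 ≤ p) {f : (E →L[ℝ] ℝ) → ℝ} (hf : PosHomog f)
    (hpos : ∀ φ, 0 ≤ f φ) (C : ℝ) {c : ℝ} (hc : 0 ≤ c) (φ : E →L[ℝ] ℝ) :
    pietschTerm hp f C (c • φ) = c ^ p • pietschTerm hp f C φ := by
  rw [pietschTerm, pietschTerm, hf.rpow_map_smul hc (hpos φ), evalAbsRpow_smul hp hc,
    smul_sub, smul_comm (c ^ p) (C ^ p), mul_smul]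

def pietschSums {p : ℝ} (hp : 0 ≤ p) (f : (E →L[ℝ] ℝ) → ℝ) (C : ℝ) : Set C(bidualBall E, ℝ) :=
  {g | ∃ (n : ℕ) (xs : Fin n → E →L[ℝ] ℝ), ∑ k, pietschTerm hp f C (xs k) = g}

theorem zero_mem_pietschSums {p : ℝ} (hp : 0 ≤ p) (f : (E →L[ℝ] ℝ) → ℝ) (C : ℝ) :
    0 ∈ pietschSums hp f C :=
  ⟨0, Fin.elim0, by simp⟩

/-- `pietschSums` is a convex cone: sums correspond to concatenating families, and scaling by
`c` to scaling the family by `c ^ p⁻¹`. -/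
theorem convex_pietschSums {p : ℝ} (hp : 0 < p) {f : (E →L[ℝ] ℝ) → ℝ} (hf : PosHomog f)
    (hpos : ∀ φ, 0 ≤ f φ) (C : ℝ) : Convex ℝ (pietschSums hp.le f C) := by
  let K : ConvexCone ℝ C(bidualBall E, ℝ) :=
    { carrier := pietschSums hp.le f C
      smul_mem' := by
        rintro c hc _ ⟨n, xs, rfl⟩
        refine ⟨n, fun k => c ^ p⁻¹ • xs k, ?_⟩
        simp only [pietschTerm_smul hp.le hf hpos C (Real.rpow_nonneg hc.le _),
          Real.rpow_inv_rpow hc.le hp.ne', Finset.smul_sum]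
      add_mem' := by
        rintro _ ⟨n, xs, rfl⟩ _ ⟨m, ys, rfl⟩
        exact ⟨n + m, Fin.append xs ys, by simp [Fin.sum_univ_add]⟩ }
  exact K.convex

theorem sum_abs_rpow_le_of_weakSumNorm_le_one {p q : ℝ} (hp : 0 < p) {f : (E →L[ℝ] ℝ) → ℝ}
    (hfin : pqNorm p q f < ⊤) {n : ℕ} {xs : Fin n → E →L[ℝ] ℝ} (hxs : weakSumNorm q xs ≤ 1) :
    ∑ k, |f (xs k)| ^ p ≤ (pqNorm p q f).toReal ^ p := by
  have hsum : 0 ≤ ∑ k, |f (xs k)| ^ p := by positivity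
  have hle : ENNReal.ofReal ((∑ k, |f (xs k)| ^ p) ^ (1 / p)) ≤ pqNorm p q f :=
    le_iSup₂_of_le n xs (le_iSup_of_le hxs le_rfl)
  have := ENNReal.toReal_mono hfin.ne hle
  rwa [ENNReal.toReal_ofReal (by positivity), one_div,
    Real.rpow_inv_le_iff_of_pos hsum ENNReal.toReal_nonneg hp] at this

/-- Rescaling the family by `(s⁻¹) ^ p⁻¹` makes its weak `p`-summing norm at most `1`. -/
theorem sum_rpow_le_of_forall_sum_evalAbsRpow_le {p : ℝ} (hp : 0 < p) {f : (E →L[ℝ] ℝ) → ℝ}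
    (hf : PosHomog f) (hpos : ∀ φ, 0 ≤ f φ) (hfin : pqNorm p p f < ⊤) {n : ℕ}
    {xs : Fin n → E →L[ℝ] ℝ} {s : ℝ} (hs : 0 < s)
    (h : ∀ ψ, ∑ k, evalAbsRpow hp.le (xs k) ψ ≤ s) :
    ∑ k, f (xs k) ^ p ≤ (pqNorm p p f).toReal ^ p * s := by
  set c := s⁻¹ ^ p⁻¹
  have hc : 0 ≤ c := by positivity
  have hcp : c ^ p = s⁻¹ := Real.rpow_inv_rpow (inv_nonneg.2 hs.le) hp.ne'
  have hw : weakSumNorm p (c • xs) ≤ 1 := by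
    refine Real.sSup_le ?_ zero_le_one
    rintro _ ⟨x, hx, rfl⟩
    rw [Metric.mem_closedBall, dist_zero_right] at hx
    have hψ := h ⟨_, inclusionInDoubleDual_mem hx⟩
    have hsum : ∑ k, |(c • xs) k x| ^ p = s⁻¹ * ∑ k, evalAbsRpow hp.le (xs k)
        ⟨_, inclusionInDoubleDual_mem hx⟩ := by
      simp only [Pi.smul_apply, smul_apply, smul_eq_mul, abs_mul, abs_of_nonneg hc,
        Real.mul_rpow hc (abs_nonneg _), hcp, evalAbsRpow_apply, Finset.mul_sum]
      rfl
    refine Real.rpow_le_one (by positivity) ?_ (by positivity)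
    rw [hsum, inv_mul_le_iff₀ hs, mul_one]
    exact hψ
  have := sum_abs_rpow_le_of_weakSumNorm_le_one hp hfin hw
  simp only [Pi.smul_apply, abs_of_nonneg (hpos _), hf.rpow_map_smul hc (hpos _), hcp,
    ← Finset.mul_sum] at this
  rwa [inv_mul_le_iff₀ hs, mul_comm] at this

/-- The supremum of `ψ ↦ ∑ |ψ (xs k)| ^ p` over the compact ball is attained; comparing with
`s` slightly above it gives the bound at the maximizer. -/
theorem exists_sum_pietschTerm_nonpos {p : ℝ} (hp : 0 < p) {f : (E →L[ℝ] ℝ) → ℝ}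
    (hf : PosHomog f) (hpos : ∀ φ, 0 ≤ f φ) (hfin : pqNorm p p f < ⊤) {n : ℕ}
    (xs : Fin n → E →L[ℝ] ℝ) :
    ∃ ψ, (∑ k, pietschTerm hp.le f (pqNorm p p f).toReal (xs k)) ψ ≤ 0 := by
  set S : C(bidualBall E, ℝ) := ∑ k, evalAbsRpow hp.le (xs k)
  have : Nonempty (bidualBall E) := ⟨⟨0, zero_mem⟩⟩
  obtain ⟨ψ, -, hψ⟩ := isCompact_univ.exists_isMaxOn univ_nonempty S.continuous.continuousOn
  refine ⟨ψ, ?_⟩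
  have hS0 : 0 ≤ S ψ := by
    simp only [S, ContinuousMap.sum_apply]
    exact Finset.sum_nonneg fun k _ => evalAbsRpow_nonneg hp.le (xs k) ψ
  have hle : ∀ s ∈ Ioi (S ψ), ∑ k, f (xs k) ^ p ≤ (pqNorm p p f).toReal ^ p * s := fun s hs =>
    sum_rpow_le_of_forall_sum_evalAbsRpow_le hp hf hpos hfin
      (hS0.trans_lt hs) fun ψ' => by
        simpa [S] using (isMaxOn_iff.1 hψ ψ' (mem_univ _)).trans_lt hs |>.le
  have : ∑ k, f (xs k) ^ p ≤ (pqNorm p p f).toReal ^ p * S ψ :=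
    ge_of_tendsto (((continuous_const_mul _).tendsto _).mono_left nhdsWithin_le_nhds)
      (eventually_nhdsWithin_of_forall (s := Ioi (S ψ)) hle)
  simp only [pietschTerm, ContinuousMap.sum_apply, ContinuousMap.sub_apply,
    ContinuousMap.smul_apply, ContinuousMap.one_apply, smul_eq_mul, mul_one,
    Finset.sum_sub_distrib, ← Finset.mul_sum]
  simpa [S] using this

end Bidual

theorem pietsch_domination_for_Hp_general
    (E : Type*) [NormedAddCommGroup E] [NormedSpace ℝ E]
    (p : ℝ) (hp : 1 ≤ p)
    (f : (E →L[ℝ] ℝ) → ℝ) (hf : PosHomog f) (hpos : ∀ φ : E →L[ℝ] ℝ, 0 ≤ f φ)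
    (hfin : pqNorm p p f < ⊤) :
    ∃ μ : Measure (bidualBall E), IsProbabilityMeasure μ ∧ μ.Regular ∧
      ∀ φ : E →L[ℝ] ℝ, f φ ≤ (pqNorm p p f).toReal * muFun p μ φ := by
  have hp₀ : 0 < p := zero_lt_one.trans_le hp
  set C := (pqNorm p p f).toReal
  obtain ⟨Λ, hΛ1, hΛ⟩ := ContinuousMap.exists_positiveLinearMap_map_one_forall_nonpos
    (convex_pietschSums hp₀ hf hpos C) (zero_mem_pietschSums hp₀.le f C)
    fun _ ⟨_, xs, hg⟩ => hg ▸ exists_sum_pietschTerm_nonpos hp₀ hf hpos hfin xs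
  obtain ⟨μ, hμ, hreg, hint⟩ := ContinuousMap.exists_isProbabilityMeasure_integral_eq Λ hΛ1
  refine ⟨μ, hμ, hreg, fun φ => ?_⟩
  have hφ : f φ ^ p ≤ C ^ p * ∫ ψ, bidualBall.evalAbsRpow hp₀.le φ ψ ∂μ := by
    have := hΛ (pietschTerm hp₀.le f C φ) ⟨1, ![φ], by simp⟩
    rw [pietschTerm, map_sub, map_smul, map_smul, hΛ1, smul_eq_mul, smul_eq_mul, mul_one,
      sub_nonpos] at this
    rwa [hint]
  rw [muFun, one_div]
  exact le_mul_rpow_inv_of_rpow_le_mul hp₀ (hpos φ)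
    (integral_nonneg (bidualBall.evalAbsRpow_nonneg hp₀.le φ)) ENNReal.toReal_nonneg hφ

/-- nonlinear Pietsch domination. If `f ∈ H_p[E]` is nonnegative, then
there is a regular Borel probability measure `μ` on `B_{E**}` (weak* topology) such that
`f(x*) ≤ ‖f‖_p · f_μ^p(x*)` for every `x* ∈ E*`. -/
theorem pietsch_domination_for_Hp
    (E : Type*) [NormedAddCommGroup E] [NormedSpace ℝ E] [CompleteSpace E]
    (p : ℝ) (hp : 1 ≤ p)
    (f : (E →L[ℝ] ℝ) → ℝ) (hf : PosHomog f) (hpos : ∀ φ : E →L[ℝ] ℝ, 0 ≤ f φ)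
    (hfin : pqNorm p p f < ⊤) :
    ∃ μ : Measure (bidualBall E), IsProbabilityMeasure μ ∧ μ.Regular ∧
      ∀ φ : E →L[ℝ] ℝ, f φ ≤ (pqNorm p p f).toReal * muFun p μ φ :=
  pietsch_domination_for_Hp_general E p hp f hf hpos hfin
end
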